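/- arXiv:1405.6288 — 2 statements merged into one kernel-verified Lean document; each statement's English description precedes it below -/
import Mathlib

section
/- The union Z_ω(U_2) = ⋃_{k≥0} Z_k(U_2) of the (finite-index) terms of the upper central series of U_2 equals the commutator subgroup [U_2, U_2], and both equal { (x + f(y), y) : f(y) ∈ K⟨y⟩ }. -/
/-!
Write `(p, b)` (`U2.mk p b`) for the automorphism `(x + p(y), y + b)`, `p ∈ K[X]`. Then
`U₂ ≅ K[X] ⋊ K`, with `b` acting by the translation `p ↦ p(X + b)`, and
`⁅(p, b), (q, c)⁆ = (Δ_b q - Δ_c p, 0)` where `Δ_b p = p(X + b) - p` (`shiftDiff b`).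
As `Δ_b` lowers degrees, `(p, 0) ∈ Z_{deg p + 1}`. In characteristic zero `Δ_b` is onto for
`b ≠ 0`: on polynomials of degree `≤ n` its kernel is the constants (a polynomial taking the
same value at every `k b` is constant), so rank–nullity applies. Hence every `(p, 0)` is a
commutator `⁅(0, 1), (r, 0)⁆`, while `(p, b) ∈ Z_{k+1}` with `b ≠ 0` is impossible: it would
put every `(Δ_b q, 0)` into `Z_k`, but `(r, 0) ∈ Z_k` forces `Δ_b^k r = 0`. So `Z_ω(U₂)`,
`[U₂, U₂]` and the stabilizer of `y` coincide.
-/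

noncomputable section
open FreeAlgebra

abbrev A2 (K : Type) [Field K] := FreeAlgebra K (Fin 2)

private lemma adjoin_stable {K : Type} [Field K]
    (φ : A2 K ≃ₐ[K] A2 K) (b : K)
    (hy : φ (ι K 1) = ι K 1 + algebraMap K (A2 K) b) :
    ∀ u ∈ Algebra.adjoin K ({ι K 1} : Set (A2 K)),
      φ u ∈ Algebra.adjoin K ({ι K 1} : Set (A2 K)) := by
  intro u hu
  induction hu using Algebra.adjoin_induction with
  | mem v hv =>
      rcases hv with rfl
      rw [hy]
      exact add_mem (Algebra.self_mem_adjoin_singleton K _) (Subalgebra.algebraMap_mem _ _)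
  | algebraMap r => rw [AlgEquiv.commutes]; exact Subalgebra.algebraMap_mem _ _
  | add u v _ _ hu hv => rw [map_add]; exact add_mem hu hv
  | mul u v _ _ hu hv => rw [map_mul]; exact mul_mem hu hv

/-- The group `U₂` of unitriangular automorphisms of the free associative algebra
`A₂ = K⟨x,y⟩` (with `x = ι K 0`, `y = ι K 1`): automorphisms sending
`x ↦ x + f(y)`, `y ↦ y + b·1` with `f ∈ K⟨y⟩`, `b ∈ K`. -/
def U2 (K : Type) [Field K] : Subgroup (A2 K ≃ₐ[K] A2 K) where
  carrier := {φ | ∃ f ∈ Algebra.adjoin K ({ι K 1} : Set (A2 K)), ∃ b : K,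
    φ (ι K 0) = ι K 0 + f ∧ φ (ι K 1) = ι K 1 + algebraMap K (A2 K) b}
  one_mem' := ⟨0, Subalgebra.zero_mem _, 0, by simp, by simp⟩
  mul_mem' := by
    rintro φ ψ ⟨f, hf, b, hfx, hfy⟩ ⟨h, hh, c, hhx, hhy⟩
    refine ⟨f + φ h, add_mem hf (adjoin_stable φ b hfy h hh), b + c, ?_, ?_⟩
    · show φ (ψ (ι K 0)) = _
      rw [hhx, map_add, hfx, add_assoc]
    · show φ (ψ (ι K 1)) = _
      rw [hhy, map_add, hfy, AlgEquiv.commutes, map_add, add_assoc]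
  inv_mem' := by
    rintro φ ⟨f, hf, b, hfx, hfy⟩
    have hsy : φ.symm (ι K 1) = ι K 1 + algebraMap K (A2 K) (-b) := by
      have h1 := congrArg φ.symm hfy
      rw [AlgEquiv.symm_apply_apply, map_add, AlgEquiv.commutes] at h1
      rw [eq_sub_of_add_eq h1.symm, map_neg, sub_eq_add_neg]
    have hsx : φ.symm (ι K 0) = ι K 0 + (-(φ.symm f)) := by
      have h1 := congrArg φ.symm hfx
      rw [AlgEquiv.symm_apply_apply, map_add] at h1
      rw [eq_sub_of_add_eq h1.symm, sub_eq_add_neg]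
    exact ⟨-(φ.symm f), neg_mem (adjoin_stable φ.symm (-b) hsy f hf), -b, hsx, hsy⟩

open Polynomial Module LinearMap
open scoped commutatorElement

namespace Polynomial

lemma mem_degreeLT_natDegree_add_one {R : Type*} [Semiring R] (p : R[X]) :
    p ∈ R[X]_(p.natDegree + 1) :=
  mem_degreeLT.2 <| degree_le_natDegree.trans_lt (by exact_mod_cast p.natDegree.lt_succ_self)

lemma finrank_degreeLT {R : Type*} [Ring R] [StrongRankCondition R] (n : ℕ) :
    finrank R R[X]_n = n := by
  rw [(degreeLTEquiv R n).finrank_eq, finrank_fin_fun]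

section CommRing

variable {R : Type*} [CommRing R]

def shiftDiff (r : R) : R[X] →ₗ[R] R[X] :=
  (taylor r : R[X] →ₗ[R] R[X]) - LinearMap.id

@[simp]
lemma shiftDiff_apply (r : R) (p : R[X]) : shiftDiff r p = taylor r p - p := rfl

@[simp]
lemma shiftDiff_zero : shiftDiff (0 : R) = 0 :=
  LinearMap.ext fun p => by simp

lemma shiftDiff_mem_degreeLT {r : R} {n : ℕ} {p : R[X]} (hp : p ∈ R[X]_(n + 1)) :
    shiftDiff r p ∈ R[X]_n := by
  have hp' : taylor r p ∈ R[X]_(n + 1) := taylor_mem_degreeLT.2 hp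
  rw [mem_degreeLT, degree_lt_iff_coeff_zero] at hp hp' ⊢
  intro m hm
  obtain rfl | hm := hm.eq_or_lt
  · have hdeg : p.natDegree ≤ n := natDegree_le_iff_coeff_eq_zero.2 hp
    rcases hdeg.eq_or_lt with h | h
    · rw [shiftDiff_apply, coeff_sub, ← h, coeff_taylor_natDegree, leadingCoeff, sub_self]
    · rw [shiftDiff_apply, coeff_sub, coeff_eq_zero_of_natDegree_lt (by rwa [natDegree_taylor]),
        coeff_eq_zero_of_natDegree_lt h, sub_self]
  · rw [shiftDiff_apply, coeff_sub, hp m hm, hp' m hm, sub_self]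

end CommRing

variable {K : Type*} [Field K] [CharZero K]

lemma eq_C_of_shiftDiff_eq_zero {r : K} (hr : r ≠ 0) {p : K[X]} (h : shiftDiff r p = 0) :
    p = C (p.coeff 0) := by
  have hp : taylor r p = p := sub_eq_zero.1 (by simpa using h)
  have heval (k : ℕ) : p.eval (k * r) = p.eval 0 := by
    induction k with
    | zero => simp
    | succ k ih => rw [Nat.cast_succ, add_one_mul, ← taylor_eval, hp, ih]
  rw [coeff_zero_eq_eval_zero]
  refine sub_eq_zero.1 (eq_zero_of_infinite_isRoot _ ?_)
  refine Set.infinite_of_injective_forall_mem (f := fun k : ℕ => (k : K) * r) ?_ fun k => ?_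
  · exact fun a b hab => Nat.cast_injective (mul_right_cancel₀ hr hab)
  · simp [heval]

theorem shiftDiff_surjective {r : K} (hr : r ≠ 0) : Function.Surjective (shiftDiff r) := by
  intro p
  set n := p.natDegree + 1
  let T : K[X]_(n + 1) →ₗ[K] K[X]_n :=
    (shiftDiff r).restrict fun _ hq => shiftDiff_mem_degreeLT hq
  have hker : finrank K (ker T) ≤ 1 := by
    have hinj :
        Function.Injective (lcoeff K 0 ∘ₗ (K[X]_(n + 1)).subtype ∘ₗ (ker T).subtype) := by
      refine (injective_iff_map_eq_zero _).2 fun ⟨⟨q, hq⟩, hqT⟩ h0 => ?_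
      have hq0 : q = C (q.coeff 0) := eq_C_of_shiftDiff_eq_zero hr (congrArg Subtype.val hqT)
      have hcoeff : q.coeff 0 = 0 := by simpa using h0
      ext1; ext1
      exact hq0.trans (by rw [hcoeff, C_0]; rfl)
    simpa using LinearMap.finrank_le_finrank_of_injective hinj
  have hT : range T = ⊤ := by
    apply Submodule.eq_top_of_finrank_eq
    have hsum := T.finrank_range_add_finrank_ker
    have hle := Submodule.finrank_le (range T)
    simp only [finrank_degreeLT] at hsum hle ⊢
    omega
  obtain ⟨q, hq⟩ := LinearMap.range_eq_top.1 hT ⟨p, mem_degreeLT_natDegree_add_one p⟩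
  exact ⟨q, congrArg Subtype.val hq⟩

end Polynomial

namespace U2

variable {K : Type} [Field K]

def homMk (p : K[X]) (b : K) : A2 K →ₐ[K] A2 K :=
  FreeAlgebra.lift K (![ι K 0 + aeval (ι K 1) p, ι K 1 + algebraMap K (A2 K) b] : Fin 2 → A2 K)

@[simp]
lemma homMk_x (p : K[X]) (b : K) : homMk p b (ι K 0) = ι K 0 + aeval (ι K 1) p := by
  simp [homMk]

@[simp]
lemma homMk_y (p : K[X]) (b : K) : homMk p b (ι K 1) = ι K 1 + algebraMap K (A2 K) b := by
  simp [homMk]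

lemma homMk_aeval_y (p : K[X]) (b : K) (q : K[X]) :
    homMk p b (aeval (ι K 1) q) = aeval (ι K 1) (taylor b q) := by
  rw [← aeval_algHom_apply, homMk_y, taylor_apply, aeval_comp]
  simp

lemma homMk_comp (p : K[X]) (b : K) (q : K[X]) (c : K) :
    (homMk p b).comp (homMk q c) = homMk (p + taylor b q) (b + c) := by
  ext i
  fin_cases i
  · simp [homMk_aeval_y, add_assoc]
  · simp [add_assoc]

lemma homMk_zero_zero : homMk (0 : K[X]) 0 = AlgHom.id K (A2 K) := by
  ext i
  fin_cases i <;> simp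

def mk (p : K[X]) (b : K) : U2 K :=
  ⟨AlgEquiv.ofAlgHom (homMk p b) (homMk (-taylor (-b) p) (-b))
    (by rw [homMk_comp, map_neg, taylor_taylor, add_neg_cancel, taylor_zero, add_neg_cancel,
      homMk_zero_zero])
    (by rw [homMk_comp, neg_add_cancel, neg_add_cancel, homMk_zero_zero]),
   aeval (ι K 1) p, by rw [Algebra.adjoin_singleton_eq_range_aeval]; exact ⟨p, rfl⟩, b,
   homMk_x p b, homMk_y p b⟩

@[simp]
lemma mk_apply (p : K[X]) (b : K) (u : A2 K) : (mk p b : A2 K ≃ₐ[K] A2 K) u = homMk p b u := rfl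

lemma mk_mul (p : K[X]) (b : K) (q : K[X]) (c : K) :
    mk p b * mk q c = mk (p + taylor b q) (b + c) :=
  Subtype.ext <| AlgEquiv.ext fun u => AlgHom.congr_fun (homMk_comp p b q c) u

@[simp]
lemma mk_zero_zero : mk (0 : K[X]) 0 = 1 :=
  Subtype.ext <| AlgEquiv.ext fun u => AlgHom.congr_fun homMk_zero_zero u

lemma mk_inv (p : K[X]) (b : K) : (mk p b)⁻¹ = mk (-taylor (-b) p) (-b) := by
  refine inv_eq_of_mul_eq_one_right ?_
  rw [mk_mul, map_neg, taylor_taylor, add_neg_cancel, taylor_zero, add_neg_cancel, mk_zero_zero]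

lemma exists_eq_mk (φ : U2 K) : ∃ p b, φ = mk p b := by
  obtain ⟨f, hf, b, hx, hy⟩ := φ.2
  rw [Algebra.adjoin_singleton_eq_range_aeval] at hf
  obtain ⟨p, rfl⟩ := hf
  refine ⟨p, b, Subtype.ext <| AlgEquiv.coe_toAlgHom_injective <| FreeAlgebra.hom_ext ?_⟩
  funext i
  fin_cases i
  · simpa using hx
  · simpa using hy

lemma aeval_y_injective : Function.Injective (aeval (R := K) (ι K 1 : A2 K)) := by
  let pr : A2 K →ₐ[K] K[X] := FreeAlgebra.lift K ![0, X]
  refine Function.LeftInverse.injective (g := pr) fun p => ?_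
  rw [← aeval_algHom_apply]
  simp [pr]

lemma mk_eq_one_iff {p : K[X]} {b : K} : mk p b = 1 ↔ p = 0 ∧ b = 0 := by
  refine ⟨fun h => ⟨?_, ?_⟩, fun ⟨hp, hb⟩ => by rw [hp, hb, mk_zero_zero]⟩
  · have := congrArg (fun φ : U2 K => (φ : A2 K ≃ₐ[K] A2 K) (ι K 0)) h
    exact (map_eq_zero_iff _ aeval_y_injective).1 (by simpa using this)
  · have := congrArg (fun φ : U2 K => (φ : A2 K ≃ₐ[K] A2 K) (ι K 1)) h
    simpa using this

lemma commutatorElement_mk (p : K[X]) (b : K) (q : K[X]) (c : K) :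
    ⁅mk p b, mk q c⁆ = mk (shiftDiff b q - shiftDiff c p) 0 := by
  rw [commutatorElement_def, mk_inv, mk_inv, mk_mul, mk_mul, mk_mul]
  congr 1
  · simp [taylor_taylor]
    abel
  · ring

lemma mk_mem_stabilizer_iff {p : K[X]} {b : K} :
    mk p b ∈ MulAction.stabilizer (U2 K) (ι K 1 : A2 K) ↔ b = 0 := by
  rw [MulAction.mem_stabilizer_iff, Subgroup.smul_def, AlgEquiv.smul_def]
  simp

theorem commutator_eq_stabilizer [CharZero K] :
    commutator (U2 K) = MulAction.stabilizer (U2 K) (ι K 1 : A2 K) := by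
  refine le_antisymm ?_ fun φ hφ => ?_
  · rw [commutator_def, Subgroup.commutator_le]
    intro g _ h _
    obtain ⟨p, b, rfl⟩ := exists_eq_mk g
    obtain ⟨q, c, rfl⟩ := exists_eq_mk h
    rw [commutatorElement_mk, mk_mem_stabilizer_iff]
  · obtain ⟨p, b, rfl⟩ := exists_eq_mk φ
    obtain rfl := mk_mem_stabilizer_iff.1 hφ
    obtain ⟨r, rfl⟩ := shiftDiff_surjective one_ne_zero p
    have hr : ⁅mk (0 : K[X]) 1, mk r 0⁆ = mk (shiftDiff 1 r) 0 := by
      rw [commutatorElement_mk, shiftDiff_zero, LinearMap.zero_apply, sub_zero]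
    rw [← hr, commutator_def]
    exact Subgroup.commutator_mem_commutator trivial trivial

lemma mk_mem_upperCentralSeries {k : ℕ} {p : K[X]} (hp : p ∈ K[X]_k) :
    mk p 0 ∈ Subgroup.upperCentralSeries (U2 K) k := by
  induction k generalizing p with
  | zero =>
    obtain rfl : p = 0 := by simpa [mem_degreeLT] using hp
    simp
  | succ k ih =>
    refine Subgroup.mem_upperCentralSeries_succ_iff.2 fun ψ => ?_
    obtain ⟨q, c, rfl⟩ := exists_eq_mk ψ
    rw [commutatorElement_mk, shiftDiff_zero, LinearMap.zero_apply, zero_sub]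
    exact ih (neg_mem (shiftDiff_mem_degreeLT hp))

lemma shiftDiff_pow_apply_eq_zero {k : ℕ} {p : K[X]}
    (hp : mk p 0 ∈ Subgroup.upperCentralSeries (U2 K) k) (b : K) :
    (shiftDiff b ^ k) p = 0 := by
  induction k generalizing p with
  | zero => exact (mk_eq_one_iff.1 hp).1
  | succ k ih =>
    have h := Subgroup.mem_upperCentralSeries_succ_iff.1 hp (mk 0 b)
    rw [commutatorElement_mk, map_zero, zero_sub] at h
    rw [pow_succ, Module.End.mul_apply, ← neg_eq_zero, ← map_neg]
    exact ih h

theorem mem_stabilizer_of_mem_upperCentralSeries [CharZero K] {k : ℕ} {φ : U2 K}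
    (hφ : φ ∈ Subgroup.upperCentralSeries (U2 K) k) :
    φ ∈ MulAction.stabilizer (U2 K) (ι K 1 : A2 K) := by
  obtain ⟨p, b, rfl⟩ := exists_eq_mk φ
  cases k with
  | zero => exact (Subgroup.mem_bot.1 hφ) ▸ one_mem _
  | succ k =>
    rw [mk_mem_stabilizer_iff]
    by_contra hb
    have hcomm (q : K[X]) : mk (shiftDiff b q) 0 ∈ Subgroup.upperCentralSeries (U2 K) k := by
      simpa [commutatorElement_mk] using Subgroup.mem_upperCentralSeries_succ_iff.1 hφ (mk q 0)
    obtain ⟨q, hq⟩ := (shiftDiff_surjective hb).iterate (k + 1) 1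
    rw [← Module.End.coe_pow, pow_succ, Module.End.mul_apply,
      shiftDiff_pow_apply_eq_zero (hcomm q)] at hq
    exact zero_ne_one hq

theorem exists_mem_upperCentralSeries_of_mem_stabilizer {φ : U2 K}
    (hφ : φ ∈ MulAction.stabilizer (U2 K) (ι K 1 : A2 K)) :
    ∃ k, φ ∈ Subgroup.upperCentralSeries (U2 K) k := by
  obtain ⟨p, b, rfl⟩ := exists_eq_mk φ
  obtain rfl := mk_mem_stabilizer_iff.1 hφ
  exact ⟨p.natDegree + 1, mk_mem_upperCentralSeries (mem_degreeLT_natDegree_add_one p)⟩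

end U2

theorem Z_omega_U2 (K : Type) [Field K] [CharZero K] (φ : U2 K) :
    ((∃ k : ℕ, φ ∈ upperCentralSeries ↥(U2 K) k) ↔ φ ∈ commutator ↥(U2 K)) ∧
    (φ ∈ commutator ↥(U2 K) ↔
      ∃ f ∈ Algebra.adjoin K ({ι K 1} : Set (A2 K)),
        (φ : A2 K ≃ₐ[K] A2 K) (ι K 0) = ι K 0 + f ∧
        (φ : A2 K ≃ₐ[K] A2 K) (ι K 1) = ι K 1) := by
  have hZ : (∃ k : ℕ, φ ∈ upperCentralSeries ↥(U2 K) k) ↔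
      φ ∈ MulAction.stabilizer (U2 K) (ι K 1 : A2 K) :=
    ⟨fun ⟨_, hk⟩ => U2.mem_stabilizer_of_mem_upperCentralSeries hk,
      U2.exists_mem_upperCentralSeries_of_mem_stabilizer⟩
  rw [hZ, U2.commutator_eq_stabilizer, MulAction.mem_stabilizer_iff, Subgroup.smul_def,
    AlgEquiv.smul_def]
  refine ⟨Iff.rfl, fun hy => ?_, fun ⟨_, _, _, hy⟩ => hy⟩
  obtain ⟨f, hf, _, hx, _⟩ := φ.2
  exact ⟨f, hf, hx, hy⟩
end
end

section
/- The group U_2 of unitriangular automorphisms of A_2 = K⟨x,y⟩ is not linear: for every field F and every natural number m there is no injective group homomorphism from U_2 into GL_m(F). -/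
/-!
Conjugation by `s = (x, y + 1)` acts on the abelian subgroup of translations
`t_f = (x + f(y), y)` by `f ↦ f(y + 1)`. Given a faithful `ρ : U₂ → GL_m(E)` with `E`
algebraically closed, let `R` be the commutative finite-dimensional algebra generated by the
`u_f = ρ(t_f)`, with the automorphism `σ = ρ(s) · ρ(s)⁻¹`. Some power `σⁿ` fixes any given
maximal ideal `P` of `R`, since there are finitely many; in characteristic zero every polynomial
is a difference `g(y + n) - g(y)`, so `u_f ≡ 1` modulo `P`, and `u_f - 1` lies in the Jacobson
radical `J`. If all `u_f - 1` lie in a `σ`-stable ideal `I`, then modulo `I²` the map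
`f ↦ u_f - 1` intertwines the difference operator with `σ - 1`; the former is surjective and
locally nilpotent, which forces `u_f - 1 ∈ I²`. Hence `u_f - 1 ∈ J^(2^k) = 0` for large `k`,
while `t_1 ≠ 1`.
-/

noncomputable section
open FreeAlgebra

open Polynomial

namespace Polynomial

theorem degree_lt_natDegree_succ {R : Type*} [Semiring R] (f : R[X]) :
    degree f < ↑(f.natDegree + 1) :=
  degree_le_natDegree.trans_lt (WithBot.coe_lt_coe.2 f.natDegree.lt_succ_self)

theorem degree_taylor_sub_lt {R : Type*} [CommRing R] (r : R) {f : R[X]} (hf : f ≠ 0) :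
    degree (taylor r f - f) < degree f := by
  simpa only [degree_taylor] using degree_sub_lt_left (degree_taylor f r)
    ((taylor_eq_zero r f).not.2 hf) (leadingCoeff_taylor r f)

theorem pow_taylor_sub_one_apply_eq_zero {R : Type*} [CommRing R] (r : R) {n : ℕ} {f : R[X]}
    (hf : degree f < n) : ((taylor r - 1) ^ n) f = 0 := by
  induction n generalizing f with
  | zero => simpa using hf
  | succ n ih =>
    rw [pow_succ, Module.End.mul_apply]
    by_cases h0 : f = 0
    · rw [h0, map_zero, map_zero]
    exact ih ((degree_taylor_sub_lt r h0).trans_le (Order.le_of_lt_succ hf))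

theorem surjective_taylor_sub_one {K : Type*} [Field K] [CharZero K] {b : K} (hb : b ≠ 0) :
    Function.Surjective (taylor b - 1 : Module.End K K[X]) := by
  suffices ∀ n : ℕ, ∀ g : K[X], degree g < n → ∃ f, (taylor b - 1) f = g from
    fun g ↦ this _ g (degree_lt_natDegree_succ g)
  intro n
  induction n with
  | zero => intro g hg; exact ⟨0, by simp_all⟩
  | succ n ih =>
    intro g hg
    set c := g.coeff n / ((n + 1) * b)
    have hlt : degree (g - (taylor b - 1) (monomial (n + 1) c)) < n := by
      rw [degree_lt_iff_coeff_zero]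
      intro m hm
      have hg' : ∀ k, n < k → g.coeff k = 0 := fun k hk ↦ coeff_eq_zero_of_degree_lt
        (hg.trans_le (by exact_mod_cast hk))
      simp only [LinearMap.sub_apply, Module.End.one_apply, taylor_monomial, coeff_sub,
        coeff_C_mul, coeff_X_add_C_pow, coeff_monomial]
      rcases hm.eq_or_lt with rfl | hm
      · simp [c]
        field_simp
        ring
      rcases (Nat.succ_le_of_lt hm).eq_or_lt with rfl | hm'
      · simp [hg' _ hm]
      · simp [hg' _ hm, Nat.choose_eq_zero_of_lt hm', hm'.ne]
    obtain ⟨f, hf⟩ := ih _ hlt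
    exact ⟨f + monomial (n + 1) c, by rw [map_add, hf, sub_add_cancel]⟩

end Polynomial

theorem IsNoetherian.eq_zero_of_semiconj {S M A : Type*} [Semiring S] [AddCommMonoid M]
    [Module S M] [IsNoetherian S M] [Zero A] {φ : A → M} {Δ : A → A} {T : M →ₗ[S] M}
    (hφ : Function.Semiconj φ Δ T) (hφ0 : φ 0 = 0) (hΔ : Function.Surjective Δ)
    (hnil : ∀ a, ∃ n, Δ^[n] a = 0) (a : A) : φ a = 0 := by
  obtain ⟨N, hN⟩ := T.eventually_iSup_ker_pow_eq.exists
  have hker : ∀ a, φ a ∈ LinearMap.ker (T ^ N) := fun a ↦ by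
    obtain ⟨n, hn⟩ := hnil a
    rw [← hN]
    refine Submodule.mem_iSup_of_mem n ?_
    rw [LinearMap.mem_ker, Module.End.coe_pow, ← hφ.iterate_right n a, hn, hφ0]
  obtain ⟨b, rfl⟩ := hΔ.iterate N a
  rw [hφ.iterate_right N b, ← Module.End.coe_pow]
  exact hker b

section

variable {S R : Type*} [CommSemiring S] [CommRing R] [Algebra S R]

theorem Ideal.exists_comap_pow_eq_self [IsArtinianRing R] (σ : R ≃ₐ[S] R) (P : Ideal R)
    [P.IsMaximal] : ∃ n, 0 < n ∧ P.comap (σ ^ n) = P := by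
  have comap_pow_add : ∀ j k, P.comap (σ ^ (j + k)) = (P.comap (σ ^ j)).comap (σ ^ k) :=
    fun j k ↦ by ext; simp [pow_add, AlgEquiv.mul_apply]
  obtain ⟨j, l, hjl, h⟩ := Set.Finite.exists_lt_map_eq_of_forall_mem
    (f := fun n ↦ P.comap (σ ^ n)) (t := {I | I.IsMaximal})
    (fun n ↦ Ideal.comap_isMaximal_of_surjective _ (σ ^ n).surjective)
    (IsArtinianRing.setOfPred_isMaximal_finite R)
  refine ⟨l - j, by omega, Ideal.comap_injective_of_surjective _ (σ ^ j).surjective ?_⟩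
  rw [h, ← comap_pow_add, Nat.sub_add_cancel hjl.le]

theorem Ideal.IsMaximal.sub_mem_of_le_comap {E : Type*} [Field E] [IsAlgClosed E] [Algebra E R]
    [Module.Finite E R] {P : Ideal R} (hP : P.IsMaximal) {τ : R →ₐ[E] R} (hτ : P ≤ P.comap τ)
    (r : R) : τ r - r ∈ P := by
  let _ : Field (R ⧸ P) := Ideal.Quotient.field P
  obtain ⟨c, hc⟩ := (IsAlgClosed.algebraMap_bijective_of_isIntegral (k := E)
    (K := R ⧸ P)).2 (Ideal.Quotient.mk P r)
  have hrc : r - algebraMap E R c ∈ P := by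
    rw [← Ideal.Quotient.eq_zero_iff_mem, map_sub, Ideal.Quotient.mk_algebraMap, hc, sub_self]
  simpa using P.sub_mem (hτ hrc) hrc

end

namespace AddChar

section Commutative

variable {E R K : Type*} [Field E] [CommRing R] [Algebra E R] [Field K] [CharZero K]
  (u : AddChar K[X] R) {σ : R ≃ₐ[E] R} (hσ : ∀ f, σ (u f) = u (taylor 1 f))
include hσ

theorem pow_apply_eq_apply_taylor (n : ℕ) (f : K[X]) :
    (σ ^ n) (u f) = u (taylor (n : K) f) := by
  induction n with
  | zero => simp
  | succ n ih =>
    rw [pow_succ', AlgEquiv.mul_apply, ih, hσ, taylor_taylor, Nat.cast_succ, add_comm]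

theorem sub_one_mem_of_isMaximal [IsAlgClosed E] [Module.Finite E R] (P : Ideal R)
    [hP : P.IsMaximal] (f : K[X]) : u f - 1 ∈ P := by
  have : IsArtinianRing R := IsArtinianRing.of_finite E R
  obtain ⟨n, hn, hPn⟩ := P.exists_comap_pow_eq_self σ
  obtain ⟨g, rfl⟩ := surjective_taylor_sub_one (b := (n : K)) (by exact_mod_cast hn.ne') f
  have hg : u ((taylor (n : K) - 1) g) - 1 = ((σ ^ n) (u g) - u g) * u (-g) := by
    rw [pow_apply_eq_apply_taylor u hσ, sub_mul, ← map_add_eq_mul, ← map_add_eq_mul,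
      add_neg_cancel, map_zero_eq_one, LinearMap.sub_apply, Module.End.one_apply,
      ← sub_eq_add_neg]
  rw [hg]
  exact P.mul_mem_right _ (hP.sub_mem_of_le_comap (τ := (σ ^ n).toAlgHom) hPn.ge _)

theorem sub_one_mem_sq [Module.Finite E R] {I : Ideal R} (hI : I ≤ I.comap σ)
    (h : ∀ f, u f - 1 ∈ I) (f : K[X]) : u f - 1 ∈ I ^ 2 := by
  have hI2 : I ^ 2 ≤ (I ^ 2).comap (σ : R →ₐ[E] R) :=
    (Ideal.pow_right_mono hI 2).trans (Ideal.le_comap_pow _ 2)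
  let T : Module.End E (R ⧸ I ^ 2) :=
    (Ideal.quotientMapₐ (I ^ 2) (σ : R →ₐ[E] R) hI2).toLinearMap - 1
  have hT : Function.Semiconj (fun f ↦ Ideal.Quotient.mk (I ^ 2) (u f - 1))
      (taylor (1 : K) - 1 : Module.End K K[X]) T := by
    intro f
    have hf : u (taylor 1 f) = u f * u (taylor 1 f - f) := by
      rw [← map_add_eq_mul, add_sub_cancel]
    simp only [T, LinearMap.sub_apply, Module.End.one_apply, AlgHom.toLinearMap_apply,
      Ideal.quotient_map_mkₐ, Ideal.Quotient.mkₐ_eq_mk]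
    rw [eq_comm, ← map_sub, Ideal.Quotient.eq, AlgEquiv.coe_toAlgHom, map_sub, map_one, hσ, hf]
    convert Ideal.mul_mem_mul (h f) (h (taylor 1 f - f)) using 1
    · exact sq I
    · ring
  rw [← Ideal.Quotient.eq_zero_iff_mem]
  refine IsNoetherian.eq_zero_of_semiconj hT (by simp) (surjective_taylor_sub_one one_ne_zero)
    (fun g ↦ ⟨g.natDegree + 1, ?_⟩) f
  rw [← Module.End.coe_pow]
  exact pow_taylor_sub_one_apply_eq_zero 1 (degree_lt_natDegree_succ g)

theorem eq_one_of_apply_taylor [IsAlgClosed E] [Module.Finite E R] (f : K[X]) : u f = 1 := by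
  have : IsArtinianRing R := IsArtinianRing.of_finite E R
  set J := (⊥ : Ideal R).jacobson
  have hJ : J ≤ J.comap σ := by
    have := Ideal.comap_jacobson_of_surjective (f := (σ : R →+* R)) σ.surjective (K := ⊥)
    rw [Ideal.comap_bot_of_injective (σ : R →+* R) σ.injective] at this
    exact this.ge
  have hpow : ∀ k f, u f - 1 ∈ J ^ 2 ^ k := by
    intro k
    induction k with
    | zero =>
      intro f
      rw [pow_zero, pow_one]
      exact Submodule.mem_sInf.2 fun P hP ↦ sub_one_mem_of_isMaximal u hσ P (hP := hP.2) f
    | succ k ih =>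
      have hstab : J ^ 2 ^ k ≤ (J ^ 2 ^ k).comap σ :=
        (Ideal.pow_right_mono hJ _).trans (Ideal.le_comap_pow _ _)
      simpa [pow_succ, pow_mul] using sub_one_mem_sq u hσ hstab ih
  obtain ⟨N, hN⟩ := IsArtinianRing.isNilpotent_jacobson_bot (R := R)
  have := Ideal.pow_le_pow_right N.lt_two_pow_self.le (hpow N f)
  rwa [hN, Ideal.zero_eq_bot, Ideal.mem_bot, sub_eq_zero] at this

end Commutative

open scoped IsMulCommutative in
theorem eq_one_of_mul_eq_mul_taylor {E A K : Type*} [Field E] [IsAlgClosed E] [Ring A]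
    [Algebra E A] [FiniteDimensional E A] [Field K] [CharZero K] (u : AddChar K[X] A) (g : Aˣ)
    (hg : ∀ f, g * u f = u (taylor 1 f) * g) (f : K[X]) : u f = 1 := by
  let R := Algebra.adjoin E (Set.range u)
  have : IsMulCommutative R := Algebra.isMulCommutative_adjoin E <| by
    rintro _ ⟨f₁, rfl⟩ _ ⟨f₂, rfl⟩
    rw [← map_add_eq_mul, add_comm, map_add_eq_mul]
  let σ₀ : A ≃ₐ[E] A := MulSemiringAction.toAlgEquiv E A (ConjAct.toConjAct g)
  have hσ₀ : ∀ f, σ₀ (u f) = u (taylor 1 f) := fun f ↦ by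
    simp [σ₀, ConjAct.units_smul_def, hg, mul_assoc]
  have hR : R.map (σ₀ : A →ₐ[E] A) = R := by
    rw [AlgHom.map_adjoin, ← Set.range_comp,
      show ⇑(σ₀ : A →ₐ[E] A) ∘ u = u ∘ taylor 1 from funext hσ₀,
      Function.Surjective.range_comp (f := taylor (1 : K)) (taylorEquiv (1 : K)).surjective]
  let σ : R ≃ₐ[E] R := (σ₀.subalgebraMap R).trans (Subalgebra.equivOfEq _ _ hR)
  let uR : AddChar K[X] R :=
    { toFun f := ⟨u f, Algebra.subset_adjoin ⟨f, rfl⟩⟩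
      map_zero_eq_one' := Subtype.ext u.map_zero_eq_one
      map_add_eq_mul' f₁ f₂ := Subtype.ext (u.map_add_eq_mul f₁ f₂) }
  exact congrArg Subtype.val
    (uR.eq_one_of_apply_taylor (σ := σ) (fun f ↦ Subtype.ext (hσ₀ f)) f)

end AddChar

namespace U2

variable {K : Type} [Field K]

/-- The endomorphism `(x + f(y), y + b)` of `A₂`. -/
def unitriangularHom (f : K[X]) (b : K) : A2 K →ₐ[K] A2 K :=
  lift K ![ι K 0 + aeval (ι K 1) f, ι K 1 + algebraMap K (A2 K) b]

@[simp]
theorem unitriangularHom_x (f : K[X]) (b : K) :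
    unitriangularHom f b (ι K 0) = ι K 0 + aeval (ι K 1) f := by
  simp [unitriangularHom]

@[simp]
theorem unitriangularHom_y (f : K[X]) (b : K) :
    unitriangularHom f b (ι K 1) = ι K 1 + algebraMap K (A2 K) b := by
  simp [unitriangularHom]

theorem unitriangularHom_comp (f g : K[X]) (b c : K) :
    (unitriangularHom f b).comp (unitriangularHom g c) =
      unitriangularHom (f + taylor b g) (b + c) := by
  ext i
  fin_cases i
  · simp [← aeval_algHom_apply, taylor_apply, aeval_comp, add_assoc]
  · simp [add_assoc]

theorem unitriangularHom_zero : unitriangularHom (0 : K[X]) 0 = AlgHom.id K (A2 K) := by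
  ext i
  fin_cases i <;> simp

def unitriangular (f : K[X]) (b : K) : U2 K :=
  ⟨AlgEquiv.ofAlgHom (unitriangularHom f b) (unitriangularHom (-taylor (-b) f) (-b))
    (by simp [unitriangularHom_comp, taylor_taylor, unitriangularHom_zero])
    (by simp [unitriangularHom_comp, unitriangularHom_zero]),
    aeval (ι K 1) f, aeval_mem_adjoin_singleton K _, b,
    unitriangularHom_x f b, unitriangularHom_y f b⟩

theorem unitriangular_mul (f g : K[X]) (b c : K) :
    unitriangular f b * unitriangular g c = unitriangular (f + taylor b g) (b + c) :=
  Subtype.ext <| AlgEquiv.ext fun z ↦ by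
    simpa [unitriangular] using DFunLike.congr_fun (unitriangularHom_comp f g b c) z

theorem unitriangular_zero : unitriangular (0 : K[X]) 0 = 1 :=
  Subtype.ext <| AlgEquiv.ext fun z ↦ by
    simpa [unitriangular] using DFunLike.congr_fun unitriangularHom_zero z

def shiftX : AddChar K[X] (U2 K) where
  toFun f := unitriangular f 0
  map_zero_eq_one' := unitriangular_zero
  map_add_eq_mul' f g := by rw [unitriangular_mul, taylor_zero, add_zero]

theorem unitriangular_mul_shiftX (f : K[X]) :
    unitriangular 0 1 * shiftX f = shiftX (taylor 1 f) * unitriangular 0 1 := by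
  simp [shiftX, unitriangular_mul]

theorem shiftX_one_ne_one : shiftX (1 : K[X]) ≠ 1 := fun h ↦ by
  have := congr(($h : A2 K ≃ₐ[K] A2 K) (ι K 0))
  simp [shiftX, unitriangular] at this

end U2

theorem U2_not_linear (K : Type) [Field K] [CharZero K] (F : Type) [Field F] (m : ℕ)
    (ρ : ↥(U2 K) →* Matrix.GeneralLinearGroup (Fin m) F) :
    ¬ Function.Injective ρ := by
  intro hρ
  let E := AlgebraicClosure F
  let ψ : U2 K →* GL (Fin m) E := (Matrix.GeneralLinearGroup.map (algebraMap F E)).comp ρ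
  have hψ : Function.Injective ψ :=
    (Units.map_injective (Matrix.map_injective (algebraMap F E).injective)).comp hρ
  let u : AddChar K[X] (Matrix (Fin m) (Fin m) E) :=
    ((Units.coeHom _).comp ψ).compAddChar U2.shiftX
  have hu : u 1 = 1 := u.eq_one_of_mul_eq_mul_taylor (E := E) (ψ (U2.unitriangular 0 1))
    (fun f ↦ by simp [u, ← Units.val_mul, ← map_mul, U2.unitriangular_mul_shiftX]) 1
  exact U2.shiftX_one_ne_one (hψ (Units.ext (by simpa [u] using hu)))
end
end
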